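/- arXiv:1611.00411 — 3 statements merged into one kernel-verified Lean document; each statement's English description precedes it below -/
import Mathlib

section
/- Any two legal stabilizing sequences for a sandpile s are permutations of each other. Consequently the odometer function u(x) = number of occurrences of x in a legal stabilizing sequence is well defined, independent of the choice of legal stabilizing sequence. -/
/-- Toppling vertex `x`: `x` loses `deg x` particles and each neighbor gains one. -/
def SimpleGraph.topple {V : Type*} [DecidableEq V] (G : SimpleGraph V) [G.LocallyFinite]
    (s : V → ℤ) (x : V) : V → ℤ :=
  fun v => s v + (if v ∈ G.neighborFinset x then 1 else 0) - (if v = x then (G.degree x : ℤ) else 0)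

/-- A sequence of vertices is legal for `s` if each vertex is unstable at the time it is toppled. -/
def SimpleGraph.Legal {V : Type*} [DecidableEq V] (G : SimpleGraph V) [G.LocallyFinite]
    (s : V → ℤ) (l : List V) : Prop :=
  ∀ i : Fin l.length, (G.degree (l.get i) : ℤ) ≤ (l.take i).foldl (G.topple) s (l.get i)

/-- A sequence of vertices is stabilizing for `s` if the resulting configuration is stable. -/
def SimpleGraph.Stabilizing {V : Type*} [DecidableEq V] (G : SimpleGraph V) [G.LocallyFinite]
    (s : V → ℤ) (l : List V) : Prop :=
  ∀ v, l.foldl (G.topple) s v ≤ (G.degree v : ℤ) - 1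


/-!
The effect of a toppling sequence depends only on how often each vertex occurs in it, so any
permutation of a stabilizing sequence is stabilizing. The least action principle follows: if
`σ` is legal and `τ` is stabilizing for `s`, then `σ` is a sub-multiset of `τ`. Indeed the first
vertex `x` of `σ` is unstable in `s`, and toppling other vertices never decreases the value at
`x`, so `x` occurs in `τ`; moving it to the front of `τ` and inducting on `σ` gives the claim.
Applying this in both directions to two legal stabilizing sequences shows they are permutations
of each other.
-/

namespace SimpleGraph

variable {V : Type*} [DecidableEq V] (G : SimpleGraph V) [G.LocallyFinite]

theorem foldl_topple_apply (s : V → ℤ) (l : List V) (v : V) :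
    l.foldl G.topple s v =
      s v + l.countP (v ∈ G.neighborFinset ·) - l.count v * G.degree v := by
  induction l generalizing s with
  | nil => simp
  | cons x l ih =>
    rw [List.foldl_cons, ih, List.countP_cons, List.count_cons, topple]
    by_cases hvx : v = x
    · subst hvx
      simp only [mem_neighborFinset, SimpleGraph.irrefl, ↓reduceIte, add_zero, decide_false,
        Bool.false_eq_true, BEq.rfl, Nat.cast_add, Nat.cast_one]
      ring
    · simp only [hvx, beq_iff_eq, Ne.symm hvx, if_false, decide_eq_true_eq]
      split_ifs <;> push_cast <;> ring

theorem foldl_topple_eq_of_perm {l l' : List V} (h : l.Perm l') (s : V → ℤ) :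
    l.foldl G.topple s = l'.foldl G.topple s := by
  funext v
  rw [foldl_topple_apply, foldl_topple_apply, h.countP_eq, h.count_eq]

variable {G}

theorem Stabilizing.of_perm {s : V → ℤ} {l l' : List V} (hs : G.Stabilizing s l)
    (h : l.Perm l') : G.Stabilizing s l' := by
  rw [Stabilizing, ← G.foldl_topple_eq_of_perm h]
  exact hs

theorem legal_cons {s : V → ℤ} {x : V} {l : List V} :
    G.Legal s (x :: l) ↔ (G.degree x : ℤ) ≤ s x ∧ G.Legal (G.topple s x) l := by
  constructor
  · intro h
    exact ⟨h ⟨0, by simp⟩, fun i => by simpa using h i.succ⟩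
  · rintro ⟨hx, hl⟩ i
    cases i using Fin.cases with
    | zero => exact hx
    | succ i => simpa using hl i

theorem Stabilizing.mem_of_unstable {s : V → ℤ} {τ : List V} (hτ : G.Stabilizing s τ) {x : V}
    (hx : (G.degree x : ℤ) ≤ s x) : x ∈ τ := by
  by_contra hxτ
  have := hτ x
  rw [foldl_topple_apply, List.count_eq_zero_of_not_mem hxτ] at this
  omega

theorem Legal.subperm {s : V → ℤ} {σ τ : List V} (hσ : G.Legal s σ)
    (hτ : G.Stabilizing s τ) : σ.Subperm τ := by
  induction σ generalizing s τ with
  | nil => exact List.nil_subperm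
  | cons x σ ih =>
    obtain ⟨hx, hσ⟩ := legal_cons.mp hσ
    have hperm : τ.Perm (x :: τ.erase x) := List.perm_cons_erase (hτ.mem_of_unstable hx)
    -- `Stabilizing s (x :: τ.erase x)` unfolds to this
    have hτ' : G.Stabilizing (G.topple s x) (τ.erase x) := hτ.of_perm hperm
    exact ((List.subperm_cons x).mpr (ih hσ hτ')).trans hperm.symm.subperm

end SimpleGraph

theorem legal_stabilizing_perm_general {V : Type*} [DecidableEq V] (G : SimpleGraph V)
    [G.LocallyFinite] (s : V → ℤ) (l l' : List V)
    (hl : G.Legal s l) (hl' : G.Legal s l')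
    (hsl : G.Stabilizing s l) (hsl' : G.Stabilizing s l') :
    l.Perm l' ∧ ∀ x : V, l.count x = l'.count x := by
  have hperm : l.Perm l' := (hl.subperm hsl').antisymm (hl'.subperm hsl)
  exact ⟨hperm, fun x => hperm.count_eq x⟩

/-- Any two legal stabilizing sequences for a sandpile `s` are permutations of each other;
consequently the odometer `u(x)` = number of occurrences of `x` is well defined. -/
theorem legal_stabilizing_perm {V : Type*} [DecidableEq V] (G : SimpleGraph V)
    [G.LocallyFinite] (hconn : G.Connected) (s : V → ℤ) (l l' : List V)
    (hl : G.Legal s l) (hl' : G.Legal s l')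
    (hsl : G.Stabilizing s l) (hsl' : G.Stabilizing s l') :
    l.Perm l' ∧ ∀ x : V, l.count x = l'.count x :=
  legal_stabilizing_perm_general G s l l' hl hl' hsl hsl'
end

section
/- For any initial divisible-sandpile configuration σ_0 : ℤ^d → ℝ_{≥0} with finite total mass, and any thorough toppling sequence, the odometer functions u_k converge pointwise to a bounded function u_∞ and the mass configurations σ_k converge pointwise to σ_∞ = σ_0 + (1/2d)Δu_∞ satisfying 0 ≤ σ_∞ ≤ 1. -/
/-- The lattice `ℤᵈ`. -/
abbrev Vd (d : ℕ) := Fin d → ℤ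

/-- The neighbor of `x` in direction `j = (i, b)`: `x + eᵢ` if `b`, else `x − eᵢ`. -/
def nbr {d : ℕ} (x : Vd d) (j : Fin d × Bool) : Vd d :=
  if j.2 then x + Pi.single j.1 1 else x - Pi.single j.1 1

/-- The graph Laplacian on `ℤᵈ`: `Δf(x) = Σ_{y ∼ x} (f(y) − f(x))`. -/
def lapd {d : ℕ} (f : Vd d → ℝ) (x : Vd d) : ℝ :=
  ∑ j : Fin d × Bool, (f (nbr x j) - f x)

/-- Toppling a site of the divisible sandpile: the excess mass above 1 at `x` (if any) is
distributed equally among the `2d` neighbors of `x`. -/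
noncomputable def toppleD {d : ℕ} (σ : Vd d → ℝ) (x : Vd d) : Vd d → ℝ := fun v =>
  if v = x then min (σ x) 1
  else if ∃ j : Fin d × Bool, v = nbr x j then σ v + max (σ x - 1) 0 / (2 * d) else σ v

/-- The mass configuration after the first `k` topplings of the sequence `x`. -/
noncomputable def confSeq {d : ℕ} (σ : Vd d → ℝ) (x : ℕ → Vd d) : ℕ → Vd d → ℝ
  | 0 => σ
  | k + 1 => toppleD (confSeq σ x k) (x k)

/-- The odometer after `k` topplings: total mass emitted from each site so far. -/
noncomputable def odomSeq {d : ℕ} (σ : Vd d → ℝ) (x : ℕ → Vd d) : ℕ → Vd d → ℝ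
  | 0 => fun _ => 0
  | k + 1 => fun v =>
      odomSeq σ x k v + if v = x k then max (confSeq σ x k v - 1) 0 else 0

/-- A toppling sequence is thorough if whenever a site attains mass `> 1`, it is chosen
for toppling at some later time. -/
def Thorough {d : ℕ} (σ : Vd d → ℝ) (x : ℕ → Vd d) : Prop :=
  ∀ k v, 1 < confSeq σ x k v → ∃ m, k ≤ m ∧ x m = v

/-!
Each toppling preserves `σₖ = σ₀ + Δuₖ / 2d`, and the odometers `uₖ` increase. Any `w ≥ 0` with
`σ₀ + Δw / 2d ≤ 1` bounds every `uₖ` (least action): toppling `v` raises `uₖ(v)` by `σₖ(v) - 1`,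
and comparing `Δuₖ(v)` with `Δw(v)` shows this cannot lift `uₖ(v)` above `w(v)`.

As `ℤᵈ` has no Green's function for `d ≤ 2`, the bounded barrier `w` is built in one coordinate:
project `σ₀` (of mass `M`) onto it and convolve with the kernel
`j ↦ T((L - |j|)₊)`, `T(m) = m(m+1)/2`, `L > M`. The kernel's second difference is `-2L` at `0`
and at most `1` elsewhere, so `w = (d / L) · potential` has `Δw / 2d ≤ M / 2L - σ₀ ≤ 1 - σ₀`.

Hence `uₖ` converges, and so does `σₖ`; the limit is `≥ 0` as every `σₖ` is, and `≤ 1` because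
thoroughness makes `σₖ(v) ≤ 1` infinitely often.
-/

open Filter Topology

section Lattice

variable {d : ℕ}

lemma nbr_apply (x : Vd d) (j : Fin d × Bool) (k : Fin d) :
    nbr x j k = x k + if k = j.1 then (if j.2 then 1 else -1) else 0 := by
  rcases j with ⟨i, _ | _⟩ <;> by_cases hk : k = i <;> simp [nbr, hk, sub_eq_add_neg]

lemma nbr_apply_of_ne (x : Vd d) {i k : Fin d} (b : Bool) (h : k ≠ i) : nbr x (i, b) k = x k := by
  simp [nbr_apply, h]

lemma nbr_ne_self (x : Vd d) (j : Fin d × Bool) : nbr x j ≠ x := by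
  intro h
  have := congrFun h j.1
  rw [nbr_apply] at this
  rcases j with ⟨i, _ | _⟩ <;> simp at this

lemma nbr_injective (x : Vd d) : Function.Injective (nbr x) := by
  rintro ⟨i, b⟩ ⟨i', b'⟩ h
  have hi := congrFun h i
  simp only [nbr_apply, if_true] at hi
  by_cases hii : i = i'
  · subst hii
    cases b <;> cases b' <;> simp_all
  · cases b <;> cases b' <;> simp [hii] at hi

lemma nbr_nbr_not (x : Vd d) (i : Fin d) (b : Bool) : nbr (nbr x (i, b)) (i, !b) = x := by
  funext k
  cases b <;>
    simp only [nbr_apply, Bool.not_false, Bool.not_true, Bool.false_eq_true, ↓reduceIte] <;>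
    split_ifs <;> ring

lemma exists_nbr_comm (v y : Vd d) : (∃ j, y = nbr v j) ↔ ∃ j, v = nbr y j := by
  constructor <;> rintro ⟨⟨i, b⟩, rfl⟩ <;> exact ⟨(i, !b), (nbr_nbr_not _ i b).symm⟩

lemma sum_ite_nbr_eq (v y : Vd d) (c : ℝ) :
    (∑ j : Fin d × Bool, if nbr v j = y then c else 0) = if ∃ j, y = nbr v j then c else 0 := by
  split_ifs with h
  · obtain ⟨j₀, rfl⟩ := h
    simp [(nbr_injective v).eq_iff]
  · simp only [not_exists] at h
    exact Finset.sum_eq_zero fun j _ => if_neg fun hj => h j hj.symm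

lemma sum_dirs_const (c : ℝ) : ∑ _j : Fin d × Bool, c = 2 * d * c := by
  rw [Finset.sum_const, Finset.card_univ, Fintype.card_prod, Fintype.card_fin, Fintype.card_bool,
    nsmul_eq_mul]
  push_cast
  ring

end Lattice

section Laplacian

variable {d : ℕ}

lemma lapd_add (f g : Vd d → ℝ) (v : Vd d) : lapd (f + g) v = lapd f v + lapd g v := by
  simp only [lapd, Pi.add_apply, ← Finset.sum_add_distrib]
  exact Finset.sum_congr rfl fun _ _ => by ring

lemma lapd_single (z : Vd d) (c : ℝ) (v : Vd d) :
    lapd (Pi.single z c) v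
      = (if ∃ j, v = nbr z j then c else 0) - 2 * d * (if v = z then c else 0) := by
  simp only [lapd, Pi.single_apply, Finset.sum_sub_distrib, sum_ite_nbr_eq, sum_dirs_const,
    exists_nbr_comm z v]

lemma lapd_comp_eval (f : ℤ → ℝ) (i : Fin d) (v : Vd d) :
    lapd (fun y => f (y i)) v = f (v i + 1) + f (v i - 1) - 2 * f (v i) := by
  rw [lapd, Fintype.sum_prod_type, Finset.sum_eq_single i]
  · simp only [Fintype.univ_bool, nbr_apply, ↓reduceIte, Finset.mem_singleton, Bool.true_eq_false,
      not_false_eq_true, Finset.sum_insert, Finset.sum_singleton, Bool.false_eq_true,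
      ← sub_eq_add_neg]
    ring
  · intro k _ hk
    simp [nbr_apply_of_ne v _ (Ne.symm hk)]
  · simp

lemma lapd_le_add_of_le {u w : Vd d → ℝ} {v : Vd d} (h : ∀ j, u (nbr v j) ≤ w (nbr v j)) :
    lapd u v ≤ lapd w v + 2 * d * (w v - u v) := by
  rw [lapd, lapd, ← sum_dirs_const, ← Finset.sum_add_distrib]
  exact Finset.sum_le_sum fun j _ => by linarith [h j]

lemma tendsto_lapd {ι : Type*} {l : Filter ι} {f : ι → Vd d → ℝ} {g : Vd d → ℝ}
    (h : ∀ v, Tendsto (fun k => f k v) l (𝓝 (g v))) (v : Vd d) :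
    Tendsto (fun k => lapd (f k) v) l (𝓝 (lapd g v)) :=
  tendsto_finsetSum _ fun j _ => (h (nbr v j)).sub (h v)

end Laplacian

section Dynamics

variable {d : ℕ}

lemma toppleD_apply (σ : Vd d → ℝ) (z v : Vd d) :
    toppleD σ z v = σ v + (if ∃ j, v = nbr z j then max (σ z - 1) 0 / (2 * d) else 0)
      - if v = z then max (σ z - 1) 0 else 0 := by
  by_cases hv : v = z
  · subst hv
    have hnot : ¬∃ j, v = nbr v j := fun ⟨j, hj⟩ => nbr_ne_self v j hj.symm
    rw [toppleD, if_pos rfl, if_neg hnot, if_pos rfl]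
    rcases le_total (σ v) 1 with h | h
    · rw [min_eq_left h, max_eq_right (by linarith)]; ring
    · rw [min_eq_right h, max_eq_left (by linarith)]; ring
  · simp only [toppleD, if_neg hv]
    split_ifs <;> ring

lemma odomSeq_succ (σ : Vd d → ℝ) (x : ℕ → Vd d) (k : ℕ) :
    odomSeq σ x (k + 1) = odomSeq σ x k + Pi.single (x k) (max (confSeq σ x k (x k) - 1) 0) := by
  funext v
  by_cases hv : v = x k
  · subst hv; simp [odomSeq]
  · simp [odomSeq, hv]

lemma odomSeq_monotone (σ : Vd d → ℝ) (x : ℕ → Vd d) (v : Vd d) :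
    Monotone fun k => odomSeq σ x k v :=
  monotone_nat_of_le_succ fun k => by
    rw [odomSeq_succ, Pi.add_apply, le_add_iff_nonneg_right, Pi.single_apply]
    split_ifs
    exacts [le_max_right _ _, le_rfl]

theorem confSeq_eq_add_lapd_odomSeq (hd : 0 < d) (σ : Vd d → ℝ) (x : ℕ → Vd d) (k : ℕ)
    (v : Vd d) : confSeq σ x k v = σ v + 1 / (2 * d) * lapd (odomSeq σ x k) v := by
  have hd' : (d : ℝ) ≠ 0 := by positivity
  induction k generalizing v with
  | zero => simp [confSeq, odomSeq, lapd]
  | succ k ih =>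
    rw [confSeq, toppleD_apply, odomSeq_succ, lapd_add, lapd_single, ih v]
    split_ifs <;> field_simp <;> ring

lemma confSeq_nonneg {σ : Vd d → ℝ} (hσ : ∀ v, 0 ≤ σ v) (x : ℕ → Vd d) (k : ℕ) (v : Vd d) :
    0 ≤ confSeq σ x k v := by
  induction k generalizing v with
  | zero => exact hσ v
  | succ k ih =>
    rw [confSeq, toppleD]
    split_ifs
    · exact le_min (ih _) zero_le_one
    · have : 0 ≤ max (confSeq σ x k (x k) - 1) 0 / (2 * d) := by positivity
      linarith [ih v]
    · exact ih v

lemma confSeq_succ_self_le_one (σ : Vd d → ℝ) (x : ℕ → Vd d) (k : ℕ) :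
    confSeq σ x (k + 1) (x k) ≤ 1 := by
  rw [confSeq, toppleD, if_pos rfl]
  exact min_le_right _ _

lemma Thorough.frequently_confSeq_le_one {σ : Vd d → ℝ} {x : ℕ → Vd d} (hx : Thorough σ x)
    (v : Vd d) : ∃ᶠ k in atTop, confSeq σ x k v ≤ 1 := by
  refine frequently_atTop.2 fun K => ?_
  by_contra! h
  obtain ⟨m, hKm, rfl⟩ := hx K v (h K le_rfl)
  exact (h (m + 1) (by omega)).not_ge (confSeq_succ_self_le_one σ x m)

/-- The least action principle. -/
theorem odomSeq_le_of_lapd_le (hd : 0 < d) {σ w : Vd d → ℝ} (hw₀ : ∀ v, 0 ≤ w v)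
    (hw : ∀ v, σ v + 1 / (2 * d) * lapd w v ≤ 1) (x : ℕ → Vd d) (k : ℕ) (v : Vd d) :
    odomSeq σ x k v ≤ w v := by
  induction k generalizing v with
  | zero => exact hw₀ v
  | succ k ih =>
    rw [odomSeq_succ, Pi.add_apply, Pi.single_apply]
    split_ifs with hv
    · subst hv
      have hlap := lapd_le_add_of_le (v := x k) fun j => ih (nbr (x k) j)
      have hconf : confSeq σ x k (x k) ≤ 1 + (w (x k) - odomSeq σ x k (x k)) := by
        rw [confSeq_eq_add_lapd_odomSeq hd]
        have h2d : (0 : ℝ) < 2 * d := by positivity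
        calc σ (x k) + 1 / (2 * d) * lapd (odomSeq σ x k) (x k)
            ≤ σ (x k) + 1 / (2 * d) * (lapd w (x k) + 2 * d * (w (x k) - odomSeq σ x k (x k))) := by
              gcongr
          _ = σ (x k) + 1 / (2 * d) * lapd w (x k) + (w (x k) - odomSeq σ x k (x k)) := by
              field_simp
              ring
          _ ≤ _ := by linarith [hw (x k)]
      rcases le_total (confSeq σ x k (x k) - 1) 0 with h | h
      · rw [max_eq_right h, add_zero]; exact ih _
      · rw [max_eq_left h]; linarith
    · rw [add_zero]; exact ih v

end Dynamics

noncomputable def quadRamp (n : ℤ) : ℝ := ((max n 0 : ℤ) : ℝ) * ((max n 0 : ℤ) + 1) / 2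

lemma quadRamp_nonneg (n : ℤ) : 0 ≤ quadRamp n := by
  have : (0 : ℝ) ≤ ((max n 0 : ℤ) : ℝ) := by exact_mod_cast le_max_right n 0
  unfold quadRamp
  positivity

lemma quadRamp_mono : Monotone quadRamp := fun m n h => by
  have h₀ : (0 : ℝ) ≤ ((max m 0 : ℤ) : ℝ) := by exact_mod_cast le_max_right m 0
  have h₁ : ((max m 0 : ℤ) : ℝ) ≤ ((max n 0 : ℤ) : ℝ) := by exact_mod_cast max_le_max_right 0 h
  unfold quadRamp
  gcongr

lemma quadRamp_sub_one (n : ℕ) : quadRamp ((n : ℤ) - 1) = quadRamp n - n := by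
  rcases Nat.eq_zero_or_pos n with rfl | hn
  · simp [quadRamp]
  · simp only [quadRamp, max_eq_left (by omega : (0 : ℤ) ≤ n - 1),
      max_eq_left (Int.natCast_nonneg n)]
    push_cast
    ring

lemma quadRamp_secondDiff_le (n : ℤ) :
    quadRamp (n + 1) + quadRamp (n - 1) - 2 * quadRamp n ≤ 1 := by
  rcases lt_trichotomy n 0 with h | rfl | h
  · simp only [quadRamp, max_eq_right (by omega : n + 1 ≤ 0), max_eq_right (by omega : n - 1 ≤ 0),
      max_eq_right h.le]
    norm_num
  · norm_num [quadRamp]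
  · simp only [quadRamp, max_eq_left (by omega : (0 : ℤ) ≤ n + 1),
      max_eq_left (by omega : (0 : ℤ) ≤ n - 1), max_eq_left h.le]
    push_cast
    linarith

noncomputable def tent (L : ℕ) (j : ℤ) : ℝ := quadRamp (L - |j|)

lemma tent_nonneg (L : ℕ) (j : ℤ) : 0 ≤ tent L j := quadRamp_nonneg _

lemma tent_le (L : ℕ) (j : ℤ) : tent L j ≤ quadRamp L :=
  quadRamp_mono (by linarith [abs_nonneg j])

lemma tent_secondDiff_le (L : ℕ) (j : ℤ) :
    tent L (j + 1) + tent L (j - 1) - 2 * tent L j ≤ 1 - if j = 0 then 2 * (L : ℝ) else 0 := by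
  split_ifs with hj
  · subst hj
    norm_num [tent, quadRamp_sub_one]
    linarith
  · have habs :
        (|j + 1| = |j| + 1 ∧ |j - 1| = |j| - 1) ∨ (|j + 1| = |j| - 1 ∧ |j - 1| = |j| + 1) := by
      simp only [abs_eq_max_neg]
      omega
    have e₁ : (L : ℤ) - (|j| + 1) = L - |j| - 1 := by ring
    have e₂ : (L : ℤ) - (|j| - 1) = L - |j| + 1 := by ring
    have key := quadRamp_secondDiff_le (L - |j|)
    simp only [tent]
    rcases habs with ⟨h₁, h₂⟩ | ⟨h₁, h₂⟩ <;> rw [h₁, h₂, e₁, e₂] <;> linarith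

section Potential

variable {ι : Type*} {μ : ι → ℝ} {φ : ℤ → ℝ} {C : ℝ}

noncomputable def projPotential (μ : ι → ℝ) (p : ι → ℤ) (φ : ℤ → ℝ) (b : ℤ) : ℝ :=
  ∑' y, μ y * φ (b - p y)

lemma summable_mul_comp (hμ : ∀ y, 0 ≤ μ y) (hs : Summable μ) (hφ₀ : ∀ j, 0 ≤ φ j)
    (hφC : ∀ j, φ j ≤ C) (f : ι → ℤ) : Summable fun y => μ y * φ (f y) :=
  Summable.of_nonneg_of_le (fun y => mul_nonneg (hμ y) (hφ₀ _))
    (fun y => mul_le_mul_of_nonneg_left (hφC _) (hμ y)) (hs.mul_right C)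

lemma projPotential_nonneg (hμ : ∀ y, 0 ≤ μ y) (hφ₀ : ∀ j, 0 ≤ φ j) (p : ι → ℤ) (b : ℤ) :
    0 ≤ projPotential μ p φ b :=
  tsum_nonneg fun y => mul_nonneg (hμ y) (hφ₀ _)

lemma projPotential_le (hμ : ∀ y, 0 ≤ μ y) (hs : Summable μ) (hφ₀ : ∀ j, 0 ≤ φ j)
    (hφC : ∀ j, φ j ≤ C) (p : ι → ℤ) (b : ℤ) : projPotential μ p φ b ≤ (∑' y, μ y) * C := by
  rw [← tsum_mul_right]
  exact Summable.tsum_le_tsum (fun y => mul_le_mul_of_nonneg_left (hφC _) (hμ y))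
    (summable_mul_comp hμ hs hφ₀ hφC _) (hs.mul_right C)

lemma projPotential_secondDiff_le (hμ : ∀ y, 0 ≤ μ y) (hs : Summable μ) (hφ₀ : ∀ j, 0 ≤ φ j)
    (hφC : ∀ j, φ j ≤ C) {c : ℝ} (hc : 0 ≤ c)
    (hφ : ∀ j, φ (j + 1) + φ (j - 1) - 2 * φ j ≤ 1 - if j = 0 then c else 0) (p : ι → ℤ) (i : ι) :
    projPotential μ p φ (p i + 1) + projPotential μ p φ (p i - 1) - 2 * projPotential μ p φ (p i)
      ≤ (∑' y, μ y) - c * μ i := by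
  classical
  have hsum (b : ℤ) := (summable_mul_comp hμ hs hφ₀ hφC fun y => b - p y).hasSum
  refine hasSum_le (fun y => ?_) (((hsum _).add (hsum _)).sub ((hsum _).mul_left 2))
    (hs.hasSum.sub (hasSum_ite_eq i (c * μ i)))
  have key := mul_le_mul_of_nonneg_left (hφ (p i - p y)) (hμ y)
  rw [show p i - p y + 1 = p i + 1 - p y by ring, show p i - p y - 1 = p i - 1 - p y by ring] at key
  split_ifs at key ⊢ with hy hpy hpy
  · subst hy; linarith
  · exact absurd (by rw [hy]; ring) hpy
  · nlinarith [hμ y]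
  · linarith

end Potential

theorem exists_bounded_lapd_le {d : ℕ} (hd : 0 < d) {σ : Vd d → ℝ} (hσ : ∀ v, 0 ≤ σ v)
    (hs : Summable σ) :
    ∃ w : Vd d → ℝ, (∀ v, 0 ≤ w v) ∧ (∃ C, ∀ v, w v ≤ C) ∧
      ∀ v, σ v + 1 / (2 * d) * lapd w v ≤ 1 := by
  set M := ∑' y, σ y
  obtain ⟨L, hML⟩ := exists_nat_gt M
  have hL : (0 : ℝ) < L := (tsum_nonneg hσ).trans_lt hML
  have hd' : (0 : ℝ) < d := by exact_mod_cast hd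
  let p : Vd d → ℤ := fun y => y ⟨0, hd⟩
  let W := projPotential σ p (tent L)
  refine ⟨fun v => d / L * W (p v), fun v => ?_, ⟨d / L * (M * quadRamp L), fun v => ?_⟩,
    fun v => ?_⟩
  · exact mul_nonneg (by positivity) (projPotential_nonneg hσ (tent_nonneg L) p _)
  · exact mul_le_mul_of_nonneg_left
      (projPotential_le hσ hs (tent_nonneg L) (tent_le L) p _) (by positivity)
  · have key := projPotential_secondDiff_le hσ hs (tent_nonneg L) (tent_le L) (by positivity)
      (tent_secondDiff_le L) p v
    rw [lapd_comp_eval (fun b => d / L * W b)]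
    calc σ v + 1 / (2 * d) * (d / L * W (p v + 1) + d / L * W (p v - 1) - 2 * (d / L * W (p v)))
        = σ v + (W (p v + 1) + W (p v - 1) - 2 * W (p v)) / (2 * L) := by field_simp
      _ ≤ σ v + (M - 2 * L * σ v) / (2 * L) := by gcongr
      _ = M / (2 * L) := by field_simp; ring
      _ ≤ 1 := by rw [div_le_one (by positivity)]; linarith

/-- For any initial configuration `σ₀ ≥ 0` of finite total mass and any thorough toppling
sequence, the odometers converge pointwise to a bounded function `uinf` and the mass
configurations converge pointwise to `σ∞ = σ₀ + (1/2d)Δuinf`, with `0 ≤ σ∞ ≤ 1`. -/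
theorem divisible_sandpile_stabilizes {d : ℕ} (hd : 0 < d) (σ₀ : Vd d → ℝ)
    (hpos : ∀ v, 0 ≤ σ₀ v) (hmass : Summable σ₀) (x : ℕ → Vd d) (hth : Thorough σ₀ x) :
    ∃ uinf : Vd d → ℝ, (∃ C : ℝ, ∀ v, uinf v ≤ C) ∧
      (∀ v, Filter.Tendsto (fun k => odomSeq σ₀ x k v) Filter.atTop (nhds (uinf v))) ∧
      (∀ v, Filter.Tendsto (fun k => confSeq σ₀ x k v) Filter.atTop
        (nhds (σ₀ v + (1 / (2 * d)) * lapd uinf v))) ∧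
      (∀ v, 0 ≤ σ₀ v + (1 / (2 * d)) * lapd uinf v ∧
        σ₀ v + (1 / (2 * d)) * lapd uinf v ≤ 1) := by
  obtain ⟨w, hw₀, ⟨C, hwC⟩, hw⟩ := exists_bounded_lapd_le hd hpos hmass
  have hle := odomSeq_le_of_lapd_le hd hw₀ hw x
  have hbdd (v : Vd d) : BddAbove (Set.range fun k => odomSeq σ₀ x k v) :=
    ⟨w v, Set.forall_mem_range.2 fun k => hle k v⟩
  let uinf v := ⨆ k, odomSeq σ₀ x k v
  have hodom (v : Vd d) : Tendsto (fun k => odomSeq σ₀ x k v) atTop (𝓝 (uinf v)) :=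
    tendsto_atTop_ciSup (odomSeq_monotone σ₀ x v) (hbdd v)
  have hconf (v : Vd d) :
      Tendsto (fun k => confSeq σ₀ x k v) atTop (𝓝 (σ₀ v + 1 / (2 * d) * lapd uinf v)) := by
    simp only [confSeq_eq_add_lapd_odomSeq hd]
    exact tendsto_const_nhds.add ((tendsto_lapd hodom v).const_mul _)
  refine ⟨uinf, ⟨C, fun v => (ciSup_le fun k => hle k v).trans (hwC v)⟩, hodom, hconf,
    fun v => ⟨?_, ?_⟩⟩
  · exact ge_of_tendsto' (hconf v) fun k => confSeq_nonneg hpos x k v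
  · exact le_of_tendsto_of_frequently (hconf v) (hth.frequently_confSeq_le_one v)
end

section
/- Holroyd–Propp bound: For any initial rotor configuration and any simple rotor mechanism on ℤ^d, if h : ℤ^d → ℝ is discrete harmonic on the rotor aggregation cluster R_n (of n particles started at the origin), then |Σ_{x ∈ R_n} h(x) − n·h(0)| ≤ Σ_{x ∈ R_n} Σ_{y ∼ x} |h(x) − h(y)|. -/
/-- A configuration during rotor aggregation: the rotor directions (as indices into each
vertex's periodic mechanism), the set of occupied sites, and the current walker (if any). -/
structure RConf (d : ℕ) where
  rotors : Vd d → ZMod (2 * d)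
  occ : Finset (Vd d)
  walker : Option (Vd d)

/-- One step of rotor aggregation with mechanism `mech`: launch a new particle at the
origin, settle the walker at an unoccupied site, or advance the rotor at the walker's
(occupied) site and move the walker to the neighbor it now points to. -/
inductive RStep {d : ℕ} (mech : Vd d → ZMod (2 * d) → Fin d × Bool) :
    RConf d → RConf d → Prop
  | launch (c : RConf d) (h : c.walker = none) :
      RStep mech c ⟨c.rotors, c.occ, some 0⟩
  | settle (c : RConf d) (p : Vd d) (h : c.walker = some p) (hp : p ∉ c.occ) :
      RStep mech c ⟨c.rotors, insert p c.occ, none⟩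
  | move (c : RConf d) (p : Vd d) (h : c.walker = some p) (hp : p ∈ c.occ) :
      RStep mech c ⟨Function.update c.rotors p (c.rotors p + 1), c.occ,
        some (nbr p (mech p (c.rotors p + 1)))⟩

/-- A complete execution of rotor aggregation of `n` particles started at the origin of
`ℤᵈ`, with rotor mechanism `mech` and initial rotor configuration `r₀`. -/
structure RotorExec (d n : ℕ) (mech : Vd d → ZMod (2 * d) → Fin d × Bool)
    (r₀ : Vd d → ZMod (2 * d)) where
  T : ℕ
  conf : ℕ → RConf d
  init : conf 0 = ⟨r₀, ∅, none⟩
  step : ∀ i < T, RStep mech (conf i) (conf (i + 1))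
  walker_final : (conf T).walker = none
  card_final : (conf T).occ.card = n

/-- A rotor mechanism is simple if each of the `2d` neighbors occurs exactly once per
period. -/
def SimpleMech {d : ℕ} (mech : Vd d → ZMod (2 * d) → Fin d × Bool) : Prop :=
  ∀ v, Function.Bijective (mech v)

variable {d n : ℕ} {mech : Vd d → ZMod (2 * d) → Fin d × Bool} {r₀ : Vd d → ZMod (2 * d)}

/-- The final cluster `Rₙ` of occupied sites. -/
def RotorExec.cluster (E : RotorExec d n mech r₀) : Finset (Vd d) := (E.conf E.T).occ

/-- The odometer: total number of exits from `x` by all particles. -/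
def RotorExec.u (E : RotorExec d n mech r₀) (x : Vd d) : ℕ :=
  ((Finset.range E.T).filter
    (fun i => (E.conf i).walker = some x ∧ x ∈ (E.conf i).occ)).card

/-- `N(x,y)`: total number of particle moves from `x` to `y`. -/
def RotorExec.N (E : RotorExec d n mech r₀) (x y : Vd d) : ℕ :=
  ((Finset.range E.T).filter (fun i => (E.conf i).walker = some x ∧
    x ∈ (E.conf i).occ ∧ (E.conf (i + 1)).walker = some y)).card

/-- `θ(x,y) = N(x,y) − N(y,x)`: net number of crossings of the directed edge `(x,y)`. -/
def RotorExec.theta (E : RotorExec d n mech r₀) (x y : Vd d) : ℤ :=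
  (E.N x y : ℤ) - (E.N y x : ℤ)

namespace ZMod

variable {m : ℕ}

theorem sum_range_add_natCast [NeZero m] {M : Type*} [AddCommMonoid M] (f : ZMod m → M)
    (a : ZMod m) :
    ∑ k ∈ Finset.range m, f (a + k) = ∑ i, f i := by
  have hinj : Function.Injective fun k : Fin m => a + (k : ℕ) := by
    intro k l hkl
    have hcast : ((k : ℕ) : ZMod m) = (l : ℕ) := add_left_cancel hkl
    have := congrArg ZMod.val hcast
    rwa [val_natCast_of_lt k.isLt, val_natCast_of_lt l.isLt, Fin.val_inj] at this
  have hbij : Function.Bijective fun k : Fin m => a + (k : ℕ) :=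
    (Fintype.bijective_iff_injective_and_card _).2 ⟨hinj, by simp⟩
  rw [← Fin.sum_univ_eq_sum_range (fun k => f (a + k)), hbij.sum_comp f]

/-- The sum of `f` along the cycle from `a + 1` up to `s`; empty for `s = a`. -/
def cyclicPartialSum {M : Type*} [AddCommMonoid M] (f : ZMod m → M) (a s : ZMod m) : M :=
  ∑ k ∈ Finset.range (s - a).val, f (a + k + 1)

theorem cyclicPartialSum_self {M : Type*} [AddCommMonoid M] (f : ZMod m → M) (a : ZMod m) :
    cyclicPartialSum f a a = 0 := by
  simp [cyclicPartialSum]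

theorem cyclicPartialSum_add_one [NeZero m] {M : Type*} [AddCommMonoid M] {f : ZMod m → M}
    (hf : ∑ i, f i = 0) (a s : ZMod m) :
    cyclicPartialSum f a (s + 1) = cyclicPartialSum f a s + f (s + 1) := by
  set v := (s - a).val with hv
  have hs : a + (v : ZMod m) = s := by rw [hv, natCast_zmod_val]; ring
  have hval : (s + 1 - a).val = (v + 1) % m := by
    rw [← val_natCast, Nat.cast_succ, hs.symm]; ring_nf
  have hlt : v < m := val_lt _
  unfold cyclicPartialSum
  rw [hval, ← hv]
  rcases Nat.lt_or_ge (v + 1) m with hvm | hvm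
  · rw [Nat.mod_eq_of_lt hvm, Finset.sum_range_succ, hs]
  · have hvm : v + 1 = m := by omega
    rw [hvm, Nat.mod_self, Finset.range_zero, Finset.sum_empty, ← hs, ← Finset.sum_range_succ,
      hvm, ← hf, ← sum_range_add_natCast f (a + 1)]
    exact Finset.sum_congr rfl fun k _ => by rw [add_right_comm]

theorem abs_cyclicPartialSum_le [NeZero m] {G : Type*} [AddCommGroup G] [LinearOrder G]
    [IsOrderedAddMonoid G] (f : ZMod m → G) (a s : ZMod m) :
    |cyclicPartialSum f a s| ≤ ∑ i, |f i| := by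
  calc |cyclicPartialSum f a s| ≤ ∑ k ∈ Finset.range (s - a).val, |f (a + k + 1)| :=
        Finset.abs_sum_le_sum_abs _ _
    _ ≤ ∑ k ∈ Finset.range m, |f (a + 1 + k)| := by
        simp_rw [add_right_comm a]
        exact Finset.sum_le_sum_of_subset_of_nonneg (Finset.range_subset_range.2 (val_lt _).le)
          fun _ _ _ => abs_nonneg _
    _ = ∑ i, |f i| := sum_range_add_natCast (fun i => |f i|) (a + 1)

end ZMod

/-- The rotor weight `w_s(p)` of the paper, normalised to vanish at the initial state `r₀ p`. -/
def rotorWeight (mech : Vd d → ZMod (2 * d) → Fin d × Bool) (r₀ : Vd d → ZMod (2 * d))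
    (h : Vd d → ℝ) (p : Vd d) (s : ZMod (2 * d)) : ℝ :=
  ZMod.cyclicPartialSum (fun t => h p - h (nbr p (mech p t))) (r₀ p) s

theorem sum_sub_nbr_mech [NeZero (2 * d)] (hmech : SimpleMech mech) (h : Vd d → ℝ) (p : Vd d) :
    ∑ t, (h p - h (nbr p (mech p t))) = -lapd h p := by
  rw [(hmech p).sum_comp (fun j => h p - h (nbr p j)), lapd, ← Finset.sum_neg_distrib]
  simp

theorem rotorWeight_add_one [NeZero (2 * d)] (hmech : SimpleMech mech) {h : Vd d → ℝ}
    {p : Vd d} (hp : lapd h p = 0) (s : ZMod (2 * d)) :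
    rotorWeight mech r₀ h p (s + 1) =
      rotorWeight mech r₀ h p s + (h p - h (nbr p (mech p (s + 1)))) :=
  ZMod.cyclicPartialSum_add_one (by rw [sum_sub_nbr_mech hmech, hp, neg_zero]) _ _

theorem abs_rotorWeight_le [NeZero (2 * d)] (hmech : SimpleMech mech) (h : Vd d → ℝ)
    (p : Vd d) (s : ZMod (2 * d)) :
    |rotorWeight mech r₀ h p s| ≤ ∑ j : Fin d × Bool, |h p - h (nbr p j)| :=
  (ZMod.abs_cyclicPartialSum_le _ _ _).trans_eq
    ((hmech p).sum_comp fun j => |h p - h (nbr p j)|)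

/-- Particles count `h x - h 0`, so that launching one at the origin changes nothing. -/
def RConf.weight (mech : Vd d → ZMod (2 * d) → Fin d × Bool) (r₀ : Vd d → ZMod (2 * d))
    (h : Vd d → ℝ) (S : Finset (Vd d)) (c : RConf d) : ℝ :=
  ∑ x ∈ c.occ, (h x - h 0) + c.walker.elim 0 (fun p => h p - h 0) +
    ∑ p ∈ S, rotorWeight mech r₀ h p (c.rotors p)

theorem RStep.occ_subset {c c' : RConf d} (hstep : RStep mech c c') : c.occ ⊆ c'.occ := by
  cases hstep with
  | settle => exact Finset.subset_insert _ _
  | _ => exact subset_rfl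

theorem RStep.weight_eq [NeZero (2 * d)] (hmech : SimpleMech mech) {h : Vd d → ℝ}
    {S : Finset (Vd d)} (hharm : ∀ x ∈ S, lapd h x = 0) {c c' : RConf d}
    (hstep : RStep mech c c') (hS : c.occ ⊆ S) :
    c'.weight mech r₀ h S = c.weight mech r₀ h S := by
  cases hstep with
  | launch hw => simp [RConf.weight, hw]
  | settle p hw hp =>
    simp only [RConf.weight, hw, Finset.sum_insert hp, Option.elim_some, Option.elim_none]
    ring
  | move p hw hp =>
    have hpS := hS hp
    simp only [RConf.weight, hw, Option.elim_some]
    rw [Finset.sum_congr rfl fun q _ => Function.apply_update (rotorWeight mech r₀ h) _ _ _ q,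
      Finset.sum_update_of_mem hpS, Finset.sum_eq_add_sum_sdiff_singleton_of_mem hpS,
      rotorWeight_add_one hmech (hharm p hpS)]
    ring

namespace RotorExec

variable (E : RotorExec d n mech r₀)

theorem occ_subset_cluster {i : ℕ} (hi : i ≤ E.T) : (E.conf i).occ ⊆ E.cluster := by
  suffices ∀ j, i ≤ j → j ≤ E.T → (E.conf i).occ ⊆ (E.conf j).occ from this E.T hi le_rfl
  intro j hij
  induction j, hij using Nat.le_induction with
  | base => exact fun _ => subset_rfl
  | succ j _ ih => exact fun hj => (ih (by omega)).trans (E.step j (by omega)).occ_subset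

theorem weight_conf_eq_zero [NeZero (2 * d)] (hmech : SimpleMech mech) {h : Vd d → ℝ}
    (hharm : ∀ x ∈ E.cluster, lapd h x = 0) {i : ℕ} (hi : i ≤ E.T) :
    (E.conf i).weight mech r₀ h E.cluster = 0 := by
  induction i with
  | zero => simp [RConf.weight, E.init, rotorWeight, ZMod.cyclicPartialSum_self]
  | succ i ih =>
    rw [(E.step i hi).weight_eq hmech hharm (E.occ_subset_cluster (by omega)), ih (by omega)]

theorem weight_final (h : Vd d → ℝ) :
    (E.conf E.T).weight mech r₀ h E.cluster = ∑ x ∈ E.cluster, h x - n * h 0 +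
      ∑ p ∈ E.cluster, rotorWeight mech r₀ h p ((E.conf E.T).rotors p) := by
  simp [RConf.weight, E.walker_final, cluster, Finset.sum_sub_distrib, E.card_final]

end RotorExec

theorem holroyd_propp_bound_general (hmech : SimpleMech mech)
    (E : RotorExec d n mech r₀) (h : Vd d → ℝ)
    (hharm : ∀ x ∈ E.cluster, lapd h x = 0) :
    |∑ x ∈ E.cluster, h x - n * h 0| ≤
      ∑ x ∈ E.cluster, ∑ j : Fin d × Bool, |h x - h (nbr x j)| := by
  have : NeZero (2 * d) := ⟨by have := (mech 0 0).1.pos; omega⟩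
  have hfinal := E.weight_final h
  rw [E.weight_conf_eq_zero hmech hharm le_rfl, eq_comm, add_eq_zero_iff_eq_neg] at hfinal
  rw [hfinal, abs_neg]
  exact (Finset.abs_sum_le_sum_abs _ _).trans
    (Finset.sum_le_sum fun p _ => abs_rotorWeight_le hmech h p _)

/-- Holroyd–Propp bound: for any initial rotor configuration and any simple rotor mechanism
on `ℤᵈ`, if `h` is discrete harmonic on the rotor aggregation cluster `Rₙ` of `n` particles
started at the origin, then `|Σ_{x ∈ Rₙ} h(x) − n·h(0)| ≤ Σ_{x ∈ Rₙ} Σ_{y∼x} |h(x) − h(y)|`. -/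
theorem holroyd_propp_bound (hd : 0 < d) (hmech : SimpleMech mech)
    (E : RotorExec d n mech r₀) (h : Vd d → ℝ)
    (hharm : ∀ x ∈ E.cluster, lapd h x = 0) :
    |∑ x ∈ E.cluster, h x - n * h 0| ≤
      ∑ x ∈ E.cluster, ∑ j : Fin d × Bool, |h x - h (nbr x j)| :=
  holroyd_propp_bound_general hmech E h hharm
end
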